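/- Let ρ be the counterclockwise rotation of ℝ² by 60°, τ a unit vector, τ₁ := ρ⁻¹τ, τ₂ := τ, τ₃ := ρτ, and νᵢ := τᵢ^⊥ (three consecutive segment directions of an admissible polygonal curve with 120° angles, turning consistently). Let a₂, h₁, h₂, h₃ ∈ ℝ and let P₁, P₂, P̄₁, P̄₂ ∈ ℝ² satisfy P₂ − P₁ = a₂·τ, (P̄₁ − P₁)·ν₁ = h₁, (P̄₁ − P₁)·ν₂ = h₂, (P̄₂ − P₂)·ν₂ = h₂, (P̄₂ − P₂)·ν₃ = h₃ (i.e. the three lines through the segments are offset by the heights h₁, h₂, h₃ and P̄₁, P̄₂ are the new intersection points). Then P̄₂ − P̄₁ = (a₂ − (2/√3)(h₁ − h₂ + h₃))·τ; in particular the length of the translated middle segment is |a₂ − (2/√3)(h₁ − h₂ + h₃)|. -/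
import Mathlib


/-- Counterclockwise rotation by 90°. -/
def perp (x : ℝ × ℝ) : ℝ × ℝ := (-x.2, x.1)

/-- Euclidean scalar product on `ℝ × ℝ`. -/
def dot (x y : ℝ × ℝ) : ℝ := x.1 * y.1 + x.2 * y.2

/-- Counterclockwise rotation by 60°. -/
noncomputable def rot60 (x : ℝ × ℝ) : ℝ × ℝ :=
  (x.1 / 2 - Real.sqrt 3 / 2 * x.2, Real.sqrt 3 / 2 * x.1 + x.2 / 2)

/-- Clockwise rotation by 60° (the inverse of `rot60`). -/
noncomputable def rotNeg60 (x : ℝ × ℝ) : ℝ × ℝ :=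
  (x.1 / 2 + Real.sqrt 3 / 2 * x.2, -(Real.sqrt 3 / 2) * x.1 + x.2 / 2)

/-- Length change formula for the middle segment of a parallel chain: with consecutive
directions `ρ⁻¹τ, τ, ρτ` (120° angles), offsetting the three lines by heights
`h₁, h₂, h₃` moves the middle segment endpoints `P₁, P₂` to `Q₁, Q₂` with
`Q₂ − Q₁ = (a₂ − (2/√3)(h₁ − h₂ + h₃))τ`; in particular the new length is
`|a₂ − (2/√3)(h₁ − h₂ + h₃)|`. -/
theorem parallel_segment_length_change
    (τ : ℝ × ℝ) (hτ : τ.1 ^ 2 + τ.2 ^ 2 = 1)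
    (a₂ h₁ h₂ h₃ : ℝ) (P₁ P₂ Q₁ Q₂ : ℝ × ℝ)
    (hP : P₂ - P₁ = a₂ • τ)
    (hQ1a : dot (Q₁ - P₁) (perp (rotNeg60 τ)) = h₁)
    (hQ1b : dot (Q₁ - P₁) (perp τ) = h₂)
    (hQ2a : dot (Q₂ - P₂) (perp τ) = h₂)
    (hQ2b : dot (Q₂ - P₂) (perp (rot60 τ)) = h₃) :
    Q₂ - Q₁ = (a₂ - 2 / Real.sqrt 3 * (h₁ - h₂ + h₃)) • τ ∧
    Real.sqrt ((Q₂ - Q₁).1 ^ 2 + (Q₂ - Q₁).2 ^ 2) =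
      |a₂ - 2 / Real.sqrt 3 * (h₁ - h₂ + h₃)| := by

  have hs0 : Real.sqrt 3 ≠ 0 := by positivity
  have hs3 : Real.sqrt 3 ^ 2 = 3 := Real.sq_sqrt (by norm_num)
  simp only [dot, perp, rot60, rotNeg60, Prod.fst_sub, Prod.snd_sub] at hQ1a hQ1b hQ2a hQ2b
  rw [Prod.ext_iff] at hP
  have hP1 : P₂.1 - P₁.1 = a₂ * τ.1 := by simpa using hP.1
  have hP2 : P₂.2 - P₁.2 = a₂ * τ.2 := by simpa using hP.2
  have key : Q₂ - Q₁ = (a₂ - 2 / Real.sqrt 3 * (h₁ - h₂ + h₃)) • τ := by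
    have c1 : Q₂.1 - Q₁.1 = (a₂ - 2 / Real.sqrt 3 * (h₁ - h₂ + h₃)) * τ.1 := by
      field_simp
      linear_combination Real.sqrt 3 * hP1 + (τ.1 - Real.sqrt 3 * τ.2) * hQ2a
        - 2 * τ.1 * hQ2b - 2 * τ.1 * hQ1a + (τ.1 + Real.sqrt 3 * τ.2) * hQ1b
        - Real.sqrt 3 * ((Q₂.1 - P₂.1) - (Q₁.1 - P₁.1)) * hτ
    have c2 : Q₂.2 - Q₁.2 = (a₂ - 2 / Real.sqrt 3 * (h₁ - h₂ + h₃)) * τ.2 := by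
      field_simp
      linear_combination Real.sqrt 3 * hP2 + (τ.2 + Real.sqrt 3 * τ.1) * hQ2a
        - 2 * τ.2 * hQ2b - 2 * τ.2 * hQ1a + (τ.2 - Real.sqrt 3 * τ.1) * hQ1b
        - Real.sqrt 3 * ((Q₂.2 - P₂.2) - (Q₁.2 - P₁.2)) * hτ
    have : (Q₂ - Q₁).1 = ((a₂ - 2 / Real.sqrt 3 * (h₁ - h₂ + h₃)) • τ).1 := by
      simpa [smul_eq_mul] using c1
    have h2 : (Q₂ - Q₁).2 = ((a₂ - 2 / Real.sqrt 3 * (h₁ - h₂ + h₃)) • τ).2 := by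
      simpa [smul_eq_mul] using c2
    exact Prod.ext this h2
  refine ⟨key, ?_⟩
  rw [key]
  have : ((a₂ - 2 / Real.sqrt 3 * (h₁ - h₂ + h₃)) • τ).1 ^ 2
      + ((a₂ - 2 / Real.sqrt 3 * (h₁ - h₂ + h₃)) • τ).2 ^ 2
      = (a₂ - 2 / Real.sqrt 3 * (h₁ - h₂ + h₃)) ^ 2 := by
    simp only [Prod.smul_fst, Prod.smul_snd, smul_eq_mul]
    nlinarith [hτ]
  rw [this, Real.sqrt_sq_eq_abs]
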